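/- For every nonempty subset I ⊆ {0,…,l}: ⟨ν_I,α_i^∨⟩ + δ_{i,0} = 0 for all i ∉ I, and ⟨ν_I,α_i^∨⟩ + δ_{i,0} > 0 for all i ∈ I. Equivalently, the point ν_I^♯ := B^♯(ν_I) lies in the relative interior of the face {ξ ∈ Δ : ⟨α_i,ξ⟩ + δ_{i,0} = 0 for all i ∉ I} of the fundamental alcove Δ := {ξ ∈ 𝔱 : ⟨α_i,ξ⟩ + δ_{i,0} ≥ 0 for i = 0,…,l}. -/

import Mathlib

/- Common setup: an irreducible reduced crystallographic root system `R ⊂ 𝔱*` spanning `𝔱*`,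
with simple roots `α 1,…,α l`, `α 0 = -θ` (θ the highest root), coroots, weight lattice,
(level `m`) affine Weyl groups acting on `𝔱*` and `𝔱`, anti-invariants, skew-symmetrization
maps and the associated chain complexes, following Meinrenken,
"On the quantization of conjugacy classes", Section 5. -/

noncomputable section
open scoped BigOperators InnerProductSpace Classical
open Function

namespace CCQ

section Generic

variable {M : Type*} [AddCommGroup M] [Module ℝ M]

/-- The affine reflection `x ↦ x - (f x + c) • v`, where `f v = 2`. -/
def aref {f : Module.Dual ℝ M} {v : M} (h : f v = 2) (c : ℝ) : M ≃ᵃ[ℝ] M :=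
  (Module.reflection h).toAffineEquiv.trans (AffineEquiv.constVAdd ℝ M (-(c • v)))

/-- The determinant of the linear part of an affine transformation, recorded as an
integer sign (all the affine transformations considered here are products of
reflections, whose linear parts have determinant `±1`). -/
def asign (w : M ≃ᵃ[ℝ] M) : ℤ :=
  if LinearMap.det w.linear.toLinearMap = 1 then 1 else -1

/-- `φ` is anti-invariant under the subgroup `H`: `w·φ = det(w)·φ`, for the action
`(w·φ)(x) = φ(w⁻¹ x)`. -/
def AntiInv (H : Subgroup (M ≃ᵃ[ℝ] M)) (φ : M → ℤ) : Prop :=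
  ∀ w ∈ H, ∀ x : M, φ (w⁻¹ x) = asign w * φ x

/-- `Sk^H(x) = Σ_{w ∈ H} det(w) · δ_{w x}` (δ-function skew-symmetrization over a
(finite) subgroup `H`). -/
def SkOrb (H : Subgroup (M ≃ᵃ[ℝ] M)) (x : M) : M → ℤ := fun y =>
  ∑ᶠ w : H, if y = (w : M ≃ᵃ[ℝ] M) x then asign (w : M ≃ᵃ[ℝ] M) else 0

/-- `T` is a complete set of representatives of the left cosets `K/H`. -/
def IsRepFinset (H K : Subgroup (M ≃ᵃ[ℝ] M)) (T : Finset (M ≃ᵃ[ℝ] M)) : Prop :=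
  (↑T : Set (M ≃ᵃ[ℝ] M)) ⊆ (K : Set (M ≃ᵃ[ℝ] M)) ∧
    ∀ w ∈ K, ∃! u, u ∈ T ∧ u⁻¹ * w ∈ H

/-- `T` is a complete set of representatives of the left cosets `K/H` (possibly infinite). -/
def IsRepSet (H K : Subgroup (M ≃ᵃ[ℝ] M)) (T : Set (M ≃ᵃ[ℝ] M)) : Prop :=
  T ⊆ (K : Set (M ≃ᵃ[ℝ] M)) ∧ ∀ w ∈ K, ∃! u, u ∈ T ∧ u⁻¹ * w ∈ H

/-- Relative skew-symmetrization `Σ_u det(u)·(u·φ)` over a finite set of coset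
representatives. -/
def SkRep (T : Finset (M ≃ᵃ[ℝ] M)) (φ : M → ℤ) : M → ℤ := fun x =>
  ∑ u ∈ T, asign u * φ (u⁻¹ x)

/-- Skew-symmetrization `Σ_u det(u)·(u·φ)` over a (possibly infinite, pointwise finite)
set of coset representatives. -/
def SkRepSet (T : Set (M ≃ᵃ[ℝ] M)) (φ : M → ℤ) : M → ℤ := fun x =>
  ∑ᶠ u : T, asign (u : M ≃ᵃ[ℝ] M) * φ ((u : M ≃ᵃ[ℝ] M)⁻¹ x)

/-- The chain supported on the single direct summand indexed by `I`. -/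
def single {n : ℕ} (I : Finset (Fin n)) (φ : M → ℤ) : Finset (Fin n) → M → ℤ := fun K =>
  if K = I then φ else 0

/-- The simplicial differential `∂`: on the summand indexed by `I = {i₀ < … < i_p}`,
`∂φ = Σ_r (-1)^r Sk_I^{δ_r I}(φ)`, written via its components: the component of `∂c` in
the summand indexed by `K` is `Σ_{i ∉ K} (-1)^{#{j ∈ K : j < i}} Sk_{K∪{i}}^K (c (K∪{i}))`.
The skew-symmetrizations `Sk_I^K` are computed using the chosen coset representative
sets `Srep K I` for `W_K/W_I`. -/
def bdGen {n : ℕ} (Srep : Finset (Fin n) → Finset (Fin n) → Finset (M ≃ᵃ[ℝ] M))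
    (c : Finset (Fin n) → M → ℤ) : Finset (Fin n) → M → ℤ := fun K x =>
  ∑ i ∈ Kᶜ, (-1 : ℤ) ^ (K.filter (fun j => j < i)).card *
    SkRep (Srep K (insert i K)) (c (insert i K)) x

/-- Restriction of a `ℤ`-valued function to a subset (extension by zero). -/
def restr (O : Set M) (φ : M → ℤ) : M → ℤ := fun x => if x ∈ O then φ x else 0

end Generic

/-- An irreducible reduced crystallographic root system `R` in `𝔱*`, spanning `𝔱*`,
together with a choice of simple roots `α 1, …, α l` and `α 0 := -θ`, where `θ` is the
highest root.  `coroot β ∈ 𝔱` is the coroot `β^∨` of a root `β ∈ R`. -/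
structure RSD (𝔱 : Type*) [AddCommGroup 𝔱] [Module ℝ 𝔱] where
  l : ℕ
  hl : 0 < l
  R : Set (Module.Dual ℝ 𝔱)
  finR : R.Finite
  spanR : Submodule.span ℝ R = ⊤
  coroot : Module.Dual ℝ 𝔱 → 𝔱
  pair_self : ∀ β ∈ R, β (coroot β) = 2
  cryst : ∀ β ∈ R, ∀ γ ∈ R, ∃ n : ℤ, γ (coroot β) = (n : ℝ)
  reduced : ∀ β ∈ R, ∀ t : ℝ, t • β ∈ R → t = 1 ∨ t = -1
  reflect_mem : ∀ β ∈ R, ∀ γ ∈ R, γ - γ (coroot β) • β ∈ R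
  α : Fin (l + 1) → Module.Dual ℝ 𝔱
  α_mem : ∀ i, α i ∈ R
  indep : LinearIndependent ℝ fun i : Fin l => α i.succ
  base : ∀ β ∈ R, (∃ c : Fin l → ℕ, β = ∑ i, (c i : ℝ) • α i.succ) ∨
    ∃ c : Fin l → ℕ, β = -∑ i, (c i : ℝ) • α i.succ
  highest : ∀ β ∈ R, ∃ c : Fin l → ℕ, -α 0 - β = ∑ i, (c i : ℝ) • α i.succ
  irred : ∀ T : Set (Fin l), T.Nonempty → Tᶜ.Nonempty →
    ∃ i ∈ T, ∃ j ∈ Tᶜ, α i.succ (coroot (α j.succ)) ≠ 0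

namespace RSD

variable {𝔱 : Type*} [AddCommGroup 𝔱] [Module ℝ 𝔱] (S : RSD 𝔱)

/-- The highest root `θ`. -/
def theta : Module.Dual ℝ 𝔱 := -S.α 0

/-- The Kronecker delta `δ_{i,0}`. -/
def kd (i : Fin (S.l + 1)) : ℝ := if i = 0 then 1 else 0

/-- The positive roots. -/
def posRoots : Finset (Module.Dual ℝ 𝔱) :=
  S.finR.toFinset.filter fun β => ∃ c : Fin S.l → ℕ, β = ∑ i, (c i : ℝ) • S.α i.succ

/-- `ρ`, the half-sum of the positive roots. -/
def rho : Module.Dual ℝ 𝔱 := (2 : ℝ)⁻¹ • ∑ β ∈ S.posRoots, β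

/-- The dual Coxeter number `h^∨ = 1 + ⟨ρ, θ^∨⟩`. -/
def hv : ℝ := 1 + S.rho (S.coroot S.theta)

/-- The weight lattice `Λ* = {μ : ⟨μ, β^∨⟩ ∈ ℤ for all β ∈ R}`. -/
def wlat : Set (Module.Dual ℝ 𝔱) := {μ | ∀ β ∈ S.R, ∃ n : ℤ, μ (S.coroot β) = (n : ℝ)}

theorem pairD (i : Fin (S.l + 1)) :
    Module.Dual.eval ℝ 𝔱 (S.coroot (S.α i)) (S.α i) = 2 := by
  simpa using S.pair_self (S.α i) (S.α_mem i)

theorem pairDR {β : Module.Dual ℝ 𝔱} (hβ : β ∈ S.R) :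
    Module.Dual.eval ℝ 𝔱 (S.coroot β) β = 2 := by
  simpa using S.pair_self β hβ

/-- The linear reflection `s_{α_i} : ν ↦ ν - ⟨ν, α_i^∨⟩ α_i` on `𝔱*`. -/
def srefl (i : Fin (S.l + 1)) : Module.Dual ℝ 𝔱 ≃ₗ[ℝ] Module.Dual ℝ 𝔱 :=
  Module.reflection (S.pairD i)

/-- The linear reflection `s_β` on `𝔱*`, for a root `β ∈ R`. -/
def sreflRoot {β : Module.Dual ℝ 𝔱} (hβ : β ∈ S.R) :
    Module.Dual ℝ 𝔱 ≃ₗ[ℝ] Module.Dual ℝ 𝔱 :=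
  Module.reflection (S.pairDR hβ)

/-- The Weyl group `W` acting on `𝔱*` (viewed inside the group of affine
transformations of `𝔱*`): the group generated by the reflections `s_β`, `β ∈ R`. -/
def WeylA : Subgroup (Module.Dual ℝ 𝔱 ≃ᵃ[ℝ] Module.Dual ℝ 𝔱) :=
  Subgroup.closure {w | ∃ β, ∃ hβ : β ∈ S.R, w = (S.sreflRoot hβ).toAffineEquiv}

/-- The subgroup `W̄_I ⊆ W` of linear automorphisms of `𝔱*` generated by the
reflections `s_{α_i}`, `i ∉ I`. -/
def WbarI (I : Finset (Fin (S.l + 1))) :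
    Subgroup (Module.Dual ℝ 𝔱 ≃ₗ[ℝ] Module.Dual ℝ 𝔱) :=
  Subgroup.closure {e | ∃ i ∉ I, e = S.srefl i}

/-- The level `m` affine reflection `σ_i : ν ↦ ν - (⟨ν,α_i^∨⟩ + m δ_{i,0}) α_i` of `𝔱*`. -/
def sigma (m : ℝ) (i : Fin (S.l + 1)) :
    Module.Dual ℝ 𝔱 ≃ᵃ[ℝ] Module.Dual ℝ 𝔱 :=
  aref (S.pairD i) (m * S.kd i)

/-- The level `m` affine Weyl group `W_aff(m)`, acting on `𝔱*`. -/
def WaffA (m : ℝ) : Subgroup (Module.Dual ℝ 𝔱 ≃ᵃ[ℝ] Module.Dual ℝ 𝔱) :=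
  Subgroup.closure (Set.range (S.sigma m))

/-- The subgroup `W_I ⊆ W_aff(m)` generated by the `σ_i` with `i ∉ I`. -/
def WIA (m : ℝ) (I : Finset (Fin (S.l + 1))) :
    Subgroup (Module.Dual ℝ 𝔱 ≃ᵃ[ℝ] Module.Dual ℝ 𝔱) :=
  Subgroup.closure {w | ∃ i ∉ I, w = S.sigma m i}

/-- `ℤ[Λ*]^{W_I-as}`: finitely supported functions `Λ* → ℤ` that are `W_I`-anti-invariant. -/
def ZLamAS (m : ℝ) (I : Finset (Fin (S.l + 1))) : Set (Module.Dual ℝ 𝔱 → ℤ) :=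
  {φ | (support φ).Finite ∧ support φ ⊆ S.wlat ∧ AntiInv (S.WIA m I) φ}

/-- `ℤ[[Λ*]]^{W_aff-as}`: all functions `Λ* → ℤ` that are `W_aff(m)`-anti-invariant. -/
def ZZLamAS (m : ℝ) : Set (Module.Dual ℝ 𝔱 → ℤ) :=
  {φ | support φ ⊆ S.wlat ∧ AntiInv (S.WaffA m) φ}

/-- The chain group `C_p = ⊕_{|I| = p+1} ℤ[Λ*]^{W_I-as}`, realized as the set of
families `c` with `c I ∈ ℤ[Λ*]^{W_I-as}` for `#I = p+1` and `c I = 0` otherwise. -/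
def ChainA (m : ℝ) (p : ℕ) : Set (Finset (Fin (S.l + 1)) → Module.Dual ℝ 𝔱 → ℤ) :=
  {c | ∀ I, (I.card = p + 1 → c I ∈ S.ZLamAS m I) ∧ (I.card ≠ p + 1 → c I = 0)}

/-- The family `Srep` provides coset representatives of `W_K/W_I` for all `K ⊆ I`. -/
def RepFamilyA (m : ℝ)
    (Srep : Finset (Fin (S.l + 1)) → Finset (Fin (S.l + 1)) →
      Finset (Module.Dual ℝ 𝔱 ≃ᵃ[ℝ] Module.Dual ℝ 𝔱)) : Prop :=
  ∀ K I : Finset (Fin (S.l + 1)), K.Nonempty → K ⊆ I →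
    IsRepFinset (S.WIA m I) (S.WIA m K) (Srep K I)

/-- The family `Seps` provides coset representatives of `W_aff(m)/W_{{i}}`. -/
def RepEpsA (m : ℝ)
    (Seps : Fin (S.l + 1) → Set (Module.Dual ℝ 𝔱 ≃ᵃ[ℝ] Module.Dual ℝ 𝔱)) : Prop :=
  ∀ i, IsRepSet (S.WIA m {i}) (S.WaffA m) (Seps i)

/-- The augmentation `ε : C_0 → ℤ[[Λ*]]^{W_aff-as}`, given on the summand indexed by
`{i}` by `Σ_u det(u)·(u·φ)`, `u` running over the coset representatives `Seps i`. -/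
def epsA (Seps : Fin (S.l + 1) → Set (Module.Dual ℝ 𝔱 ≃ᵃ[ℝ] Module.Dual ℝ 𝔱))
    (c : Finset (Fin (S.l + 1)) → Module.Dual ℝ 𝔱 → ℤ) : Module.Dual ℝ 𝔱 → ℤ := fun x =>
  ∑ i, SkRepSet (Seps i) (c {i}) x

/-- The orbit of `μ ∈ 𝔱*` under the level `m` affine Weyl group. -/
def orbA (m : ℝ) (μ : Module.Dual ℝ 𝔱) : Set (Module.Dual ℝ 𝔱) :=
  {ν | ∃ w ∈ S.WaffA m, ν = w μ}

/-- `Λ*_{I,k} = {μ ∈ Λ* : ⟨μ,α_i^∨⟩ + k δ_{i,0} ≥ 0 for all i ∉ I}`. -/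
def LamIk (k : ℝ) (I : Finset (Fin (S.l + 1))) : Set (Module.Dual ℝ 𝔱) :=
  {μ ∈ S.wlat | ∀ i ∉ I, μ (S.coroot (S.α i)) + k * S.kd i ≥ 0}

/-- `Λ*_k`, the set of level `k` weights. -/
def LamK (k : ℝ) : Set (Module.Dual ℝ 𝔱) :=
  {μ ∈ S.wlat | ∀ i, μ (S.coroot (S.α i)) + k * S.kd i ≥ 0}

/-- The positive roots of `R_I = R ∩ ℤ-span(𝔖_I)` relative to the base
`𝔖_I = {α_i : i ∉ I}`: the roots that are `ℕ`-combinations of `𝔖_I`. -/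
def posRootsI (I : Finset (Fin (S.l + 1))) : Finset (Module.Dual ℝ 𝔱) :=
  S.finR.toFinset.filter fun β =>
    ∃ c : Fin (S.l + 1) → ℕ, (∀ i ∈ I, c i = 0) ∧ β = ∑ i, (c i : ℝ) • S.α i

/-- `ρ_I`, the half-sum of the positive roots of `R_I`. -/
def rhoI (I : Finset (Fin (S.l + 1))) : Module.Dual ℝ 𝔱 :=
  (2 : ℝ)⁻¹ • ∑ β ∈ S.posRootsI I, β

/-- `ν_I = (ρ - ρ_I)/h^∨`. -/
def nuI (I : Finset (Fin (S.l + 1))) : Module.Dual ℝ 𝔱 := S.hv⁻¹ • (S.rho - S.rhoI I)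

theorem pairB (i : Fin (S.l + 1)) : S.α i (S.coroot (S.α i)) = 2 :=
  S.pair_self (S.α i) (S.α_mem i)

/-- The affine reflection `r_i : ξ ↦ ξ - (⟨α_i,ξ⟩ + δ_{i,0}) α_i^∨` of `𝔱`, i.e. the
orthogonal (for the basic inner product) reflection in the hyperplane
`{ξ : ⟨α_i,ξ⟩ + δ_{i,0} = 0}`. -/
def rrefl (i : Fin (S.l + 1)) : 𝔱 ≃ᵃ[ℝ] 𝔱 := aref (S.pairB i) (S.kd i)

/-- The affine Weyl group `W_aff` acting on `𝔱`, generated by `r_0, …, r_l`. -/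
def WaffB : Subgroup (𝔱 ≃ᵃ[ℝ] 𝔱) := Subgroup.closure (Set.range S.rrefl)

/-- The subgroup `W_I ⊆ W_aff` generated by the `r_i` with `i ∉ I`. -/
def WIB (I : Finset (Fin (S.l + 1))) : Subgroup (𝔱 ≃ᵃ[ℝ] 𝔱) :=
  Subgroup.closure {w | ∃ i ∉ I, w = S.rrefl i}

/-- The orbit `V = W_aff · ξ ⊆ 𝔱`. -/
def orbB (ξ : 𝔱) : Set 𝔱 := {x | ∃ w ∈ S.WaffB, x = w ξ}

/-- `ℓ(x) = min {ℓ(w) : w ∈ W_aff, x = w·ξ}`: the minimal length of a word in the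
generators `r_0,…,r_l` moving `ξ` to `x`. -/
def lenPt (ξ x : 𝔱) : ℕ :=
  sInf {n | ∃ L : List (Fin (S.l + 1)), L.length = n ∧ x = (L.map S.rrefl).prod ξ}

/-- `𝔱_{I,+} = {ξ : ⟨α_i,ξ⟩ + δ_{i,0} ≥ 0 for all i ∉ I}`. -/
def tplus (I : Finset (Fin (S.l + 1))) : Set 𝔱 := {ξ | ∀ i ∉ I, S.α i ξ + S.kd i ≥ 0}

/-- `V̄^I = V ∩ 𝔱_{I,+}`. -/
def VbarI (ξ : 𝔱) (I : Finset (Fin (S.l + 1))) : Set 𝔱 := S.orbB ξ ∩ S.tplus I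

/-- `V^I = V ∩ int(𝔱_{I,+})`. -/
def VIset [TopologicalSpace 𝔱] (ξ : 𝔱) (I : Finset (Fin (S.l + 1))) : Set 𝔱 :=
  S.orbB ξ ∩ interior (S.tplus I)

/-- `ℤ[V]^{W_I-as}`: finitely supported functions `V → ℤ` that are `W_I`-anti-invariant. -/
def ZVAS (ξ : 𝔱) (I : Finset (Fin (S.l + 1))) : Set (𝔱 → ℤ) :=
  {φ | (support φ).Finite ∧ support φ ⊆ S.orbB ξ ∧ AntiInv (S.WIB I) φ}

/-- The chain group `C_p(J) = ⊕_{|I| = p+1} ℤ[V]^{W_I-as}`. -/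
def ChainB (ξ : 𝔱) (p : ℕ) : Set (Finset (Fin (S.l + 1)) → 𝔱 → ℤ) :=
  {c | ∀ I, (I.card = p + 1 → c I ∈ S.ZVAS ξ I) ∧ (I.card ≠ p + 1 → c I = 0)}

/-- The family `Srep` provides coset representatives of `W_K/W_I` for all `K ⊆ I`
(affine Weyl group acting on `𝔱`). -/
def RepFamilyB (Srep : Finset (Fin (S.l + 1)) → Finset (Fin (S.l + 1)) →
    Finset (𝔱 ≃ᵃ[ℝ] 𝔱)) : Prop :=
  ∀ K I : Finset (Fin (S.l + 1)), K.Nonempty → K ⊆ I →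
    IsRepFinset (S.WIB I) (S.WIB K) (Srep K I)

/-- The filtration `F_N C_p(J)`: the subgroup generated by the basis elements
`β_I(x) = Sk^I(x)` with `#I = p+1`, `x ∈ V^I`, `ℓ(x) ≤ N`. -/
def FNB [TopologicalSpace 𝔱] (ξ : 𝔱) (N : ℤ) (p : ℕ) :
    AddSubgroup (Finset (Fin (S.l + 1)) → 𝔱 → ℤ) :=
  AddSubgroup.closure {c | ∃ I x, I.card = p + 1 ∧ x ∈ S.VIset ξ I ∧
    (S.lenPt ξ x : ℤ) ≤ N ∧ c = single I (SkOrb (S.WIB I) x)}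

/-- The homotopy operator `h_i`, defined on basis elements by `h_i β_I(x) = 0` if
`i ∈ I` and `h_i β_I(x) = (-1)^{#{j ∈ I : j < i}} β_{I∪{i}}(x)` if `i ∉ I` (the
coefficient of `β_I(x)`, `x ∈ V^I`, in an anti-invariant `φ` is `φ(x)`). -/
def hBmap [TopologicalSpace 𝔱] (ξ : 𝔱) (i : Fin (S.l + 1))
    (c : Finset (Fin (S.l + 1)) → 𝔱 → ℤ) : Finset (Fin (S.l + 1)) → 𝔱 → ℤ := fun K y =>
  if i ∈ K then
    ∑ᶠ x : S.VIset ξ (K.erase i),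
      (-1 : ℤ) ^ ((K.erase i).filter (fun j => j < i)).card * c (K.erase i) (x : 𝔱) *
        SkOrb (S.WIB K) (x : 𝔱) y
  else 0

/-- `A_i = id - h_i ∂ - ∂ h_i`. -/
def AiB [TopologicalSpace 𝔱] (ξ : 𝔱)
    (Srep : Finset (Fin (S.l + 1)) → Finset (Fin (S.l + 1)) → Finset (𝔱 ≃ᵃ[ℝ] 𝔱))
    (i : Fin (S.l + 1)) (c : Finset (Fin (S.l + 1)) → 𝔱 → ℤ) :
    Finset (Fin (S.l + 1)) → 𝔱 → ℤ :=
  c - S.hBmap ξ i (bdGen Srep c) - bdGen Srep (S.hBmap ξ i c)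

/-- `A = A_0 ∘ A_1 ∘ ⋯ ∘ A_l`. -/
def Acomp [TopologicalSpace 𝔱] (ξ : 𝔱)
    (Srep : Finset (Fin (S.l + 1)) → Finset (Fin (S.l + 1)) → Finset (𝔱 ≃ᵃ[ℝ] 𝔱))
    (c : Finset (Fin (S.l + 1)) → 𝔱 → ℤ) : Finset (Fin (S.l + 1)) → 𝔱 → ℤ :=
  (List.finRange (S.l + 1)).foldr (fun i d => S.AiB ξ Srep i d) c

end RSD

end CCQ

/-!
For `i ∉ I` the reflection `s_i` permutes the positive roots of `R_I` other than `α_i` and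
negates their pairing with `α_i^∨`, so `⟨ρ_I, α_i^∨⟩ = 1`. That `s_i` preserves the positive
roots of `R_I` is the statement that `𝔖_I` is a base of `R_I`: as `I ≠ ∅`, `𝔖_I` omits one of
`α_0, …, α_l`, and their only linear relation `α_0 + ∑ m_j α_j = 0` has all marks `m_j ≥ 1`.
For `i ∈ I` the positive roots of `R_I` are nonnegative combinations of the `α_k`, `k ≠ i`, which
pair nonpositively with `α_i^∨`, so `⟨ρ_I, α_i^∨⟩ ≤ 0`. Since `ρ = ρ_{{0}}` and
`α_0^∨ = -θ^∨`, in all cases `⟨ν_I, α_i^∨⟩ + δ_{i,0} = (1 - ⟨ρ_I, α_i^∨⟩) / h^∨`.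

For `ν_I^♯`, invariance of `B` gives `⟨α_i, ξ⟩ = 2 B(ξ, α_i^∨) / B(α_i^∨, α_i^∨)`, a positive
multiple of `⟨ν_I, α_i^∨⟩`; the normalisation `B(θ^∨, θ^∨) = 2` makes it exactly
`⟨ν_I, α_i^∨⟩` for `i = 0`, where the shift `δ_{i,0}` matters.
-/

namespace CCQ

theorem sum_apply_eq_two_of_reflection_mem {K M : Type*} [Field K] [NeZero (2 : K)]
    [AddCommGroup M] [Module K M] {P : Finset (Module.Dual K M)} {α : Module.Dual K M} {v : M}
    (hαv : α v = 2) (hα : α ∈ P) (hnα : -α ∉ P)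
    (hP : ∀ β ∈ P, β ≠ α → β - β v • α ∈ P) :
    ∑ β ∈ P, β v = 2 := by
  have hα0 : α ≠ 0 := by
    rintro rfl
    exact two_ne_zero hαv.symm
  have hs : ∀ β : Module.Dual K M, (β - β v • α) v = -β v := fun β => by
    simp only [LinearMap.sub_apply, LinearMap.smul_apply, hαv, smul_eq_mul]
    ring
  have hrest : ∑ β ∈ P.erase α, β v = 0 := by
    refine Finset.sum_involution (fun β _ => β - β v • α) (fun β _ => by rw [hs]; ring)
      (fun β _ hβv h => hβv ?_) (fun β hβ => ?_) (fun β _ => by simp only [hs]; module)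
    · simpa [hα0] using h
    · obtain ⟨hne, hβP⟩ := Finset.mem_erase.mp hβ
      refine Finset.mem_erase.mpr ⟨fun h => hnα ?_, hP β hβP hne⟩
      have hβv : β v = -2 := by
        have := congrArg (fun f : Module.Dual K M => f v) h
        simp only [hs, hαv] at this
        linear_combination -this
      have hβ' : β = α + β v • α := eq_add_of_sub_eq h
      rw [hβv] at hβ'
      rwa [show -α = β by rw [hβ']; module]
  rw [← Finset.add_sum_erase P _ hα, hrest, hαv, add_zero]

namespace RSD

section Combinatorics

variable {𝔱 : Type*} [AddCommGroup 𝔱] [Module ℝ 𝔱] (S : RSD 𝔱)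

theorem neg_mem {β : Module.Dual ℝ 𝔱} (hβ : β ∈ S.R) : -β ∈ S.R := by
  simpa [S.pair_self β hβ, two_smul] using S.reflect_mem β hβ β hβ

theorem theta_mem : S.theta ∈ S.R := S.neg_mem (S.α_mem 0)

theorem span_alpha_succ_eq_top :
    ⊤ ≤ Submodule.span ℝ (Set.range fun i : Fin S.l => S.α i.succ) := by
  rw [← S.spanR, Submodule.span_le]
  intro β hβ
  have hsum : ∀ c : Fin S.l → ℕ, ∑ i, (c i : ℝ) • S.α i.succ ∈
      Submodule.span ℝ (Set.range fun i : Fin S.l => S.α i.succ) := fun c =>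
    Submodule.sum_mem _ fun i _ => Submodule.smul_mem _ _ (Submodule.subset_span ⟨i, rfl⟩)
  rcases S.base β hβ with ⟨c, rfl⟩ | ⟨c, rfl⟩
  · exact hsum c
  · exact Submodule.neg_mem _ (hsum c)

def simpleBasis : Module.Basis (Fin S.l) ℝ (Module.Dual ℝ 𝔱) :=
  Module.Basis.mk S.indep S.span_alpha_succ_eq_top

def simpleCoord : Module.Dual ℝ 𝔱 ≃ₗ[ℝ] (Fin S.l → ℝ) := S.simpleBasis.equivFun

def marks : Fin S.l → ℝ := S.simpleCoord S.theta

theorem simpleBasis_apply (i : Fin S.l) : S.simpleBasis i = S.α i.succ :=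
  Module.Basis.mk_apply _ _ i

theorem simpleCoord_sum (c : Fin S.l → ℝ) : S.simpleCoord (∑ i, c i • S.α i.succ) = c := by
  simp only [simpleCoord, ← S.simpleBasis_apply, ← S.simpleBasis.equivFun_symm_apply,
    LinearEquiv.apply_symm_apply]

theorem simpleCoord_alpha_succ (i : Fin S.l) : S.simpleCoord (S.α i.succ) = Pi.single i 1 := by
  simpa using S.simpleCoord_sum (Pi.single i 1)

theorem simpleCoord_alpha_zero : S.simpleCoord (S.α 0) = -S.marks := by
  rw [marks, theta, map_neg, neg_neg]

theorem simpleCoord_sum_alpha (d : Fin (S.l + 1) → ℝ) :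
    S.simpleCoord (∑ k, d k • S.α k) = fun j => d j.succ - d 0 * S.marks j := by
  rw [Fin.sum_univ_succ, map_add, map_smul, S.simpleCoord_alpha_zero, S.simpleCoord_sum]
  funext j
  simp only [Pi.add_apply, Pi.smul_apply, Pi.neg_apply, smul_eq_mul]
  ring

theorem simpleCoord_nonneg_or_nonpos {β : Module.Dual ℝ 𝔱} (hβ : β ∈ S.R) :
    (∀ j, 0 ≤ S.simpleCoord β j) ∨ (∀ j, S.simpleCoord β j ≤ 0) := by
  rcases S.base β hβ with ⟨c, rfl⟩ | ⟨c, rfl⟩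
  · left
    simp [S.simpleCoord_sum]
  · right
    simp [S.simpleCoord_sum]

theorem marks_sub_simpleCoord {β : Module.Dual ℝ 𝔱} (hβ : β ∈ S.R) :
    ∃ e : Fin S.l → ℕ, ∀ j, S.marks j - S.simpleCoord β j = e j := by
  obtain ⟨e, he⟩ := S.highest β hβ
  refine ⟨e, fun j => ?_⟩
  rw [marks, ← Pi.sub_apply, ← map_sub, theta, he, S.simpleCoord_sum]

theorem simpleCoord_le_marks {β : Module.Dual ℝ 𝔱} (hβ : β ∈ S.R) (j : Fin S.l) :
    S.simpleCoord β j ≤ S.marks j := by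
  obtain ⟨e, he⟩ := S.marks_sub_simpleCoord hβ
  linarith [he j, (e j).cast_nonneg (α := ℝ)]

theorem neg_marks_le_simpleCoord {β : Module.Dual ℝ 𝔱} (hβ : β ∈ S.R) (j : Fin S.l) :
    -S.marks j ≤ S.simpleCoord β j := by
  have := S.simpleCoord_le_marks (S.neg_mem hβ) j
  rw [map_neg, Pi.neg_apply] at this
  linarith

theorem one_le_marks (j : Fin S.l) : 1 ≤ S.marks j := by
  obtain ⟨e, he⟩ := S.marks_sub_simpleCoord (S.α_mem j.succ)
  have := he j
  rw [S.simpleCoord_alpha_succ, Pi.single_eq_same] at this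
  linarith [(e j).cast_nonneg (α := ℝ)]

/-- The only linear relation among `α 0, …, α l` is `α 0 + ∑ marks j • α j.succ = 0`, whose
coefficients are all nonzero; so any `l` of them are linearly independent. -/
theorem coeffs_eq_zero_of_sum_eq_zero {d : Fin (S.l + 1) → ℝ} (hd : ∑ k, d k • S.α k = 0)
    {j₀ : Fin (S.l + 1)} (hj₀ : d j₀ = 0) : d = 0 := by
  have hc := congrArg S.simpleCoord hd
  rw [S.simpleCoord_sum_alpha, map_zero] at hc
  have hsucc : ∀ j, d j.succ = d 0 * S.marks j := fun j => sub_eq_zero.mp (congrFun hc j)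
  have h0 : d 0 = 0 := by
    cases j₀ using Fin.cases with
    | zero => exact hj₀
    | succ j =>
      rw [hsucc] at hj₀
      exact (mul_eq_zero.mp hj₀).resolve_right (by linarith [S.one_le_marks j])
  funext k
  cases k using Fin.cases with
  | zero => exact h0
  | succ j => simp [hsucc, h0]

theorem abs_coeff_zero_le_one {γ : Module.Dual ℝ 𝔱} (hγ : γ ∈ S.R) {d : Fin (S.l + 1) → ℝ}
    (hd : γ = ∑ k, d k • S.α k) {j₀ : Fin (S.l + 1)} (hj₀ : d j₀ = 0) : |d 0| ≤ 1 := by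
  cases j₀ using Fin.cases with
  | zero => simp [hj₀]
  | succ j =>
    have hup := S.simpleCoord_le_marks hγ j
    have hlow := S.neg_marks_le_simpleCoord hγ j
    simp only [hd, S.simpleCoord_sum_alpha, hj₀, zero_sub] at hup hlow
    have := S.one_le_marks j
    exact abs_le.mpr ⟨by nlinarith, by nlinarith⟩

/-- `{α k : k ≠ j₀}` is a base of the roots in its `ℤ`-span. -/
theorem coeffs_nonneg_or_nonpos {γ : Module.Dual ℝ 𝔱} (hγ : γ ∈ S.R) {d : Fin (S.l + 1) → ℤ}
    (hd : γ = ∑ k, (d k : ℝ) • S.α k) {j₀ : Fin (S.l + 1)} (hj₀ : d j₀ = 0) :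
    (∀ k, 0 ≤ d k) ∨ (∀ k, d k ≤ 0) := by
  have hc : ∀ j, S.simpleCoord γ j = d j.succ - d 0 * S.marks j := by
    simp [hd, S.simpleCoord_sum_alpha]
  have hd0 : |d 0| ≤ 1 := by
    exact_mod_cast S.abs_coeff_zero_le_one hγ hd (by simp [hj₀] : (d j₀ : ℝ) = 0)
  simp only [Fin.forall_fin_succ (P := fun k => 0 ≤ d k),
    Fin.forall_fin_succ (P := fun k => d k ≤ 0)]
  rcases (by rw [abs_le] at hd0; omega : d 0 = -1 ∨ d 0 = 0 ∨ d 0 = 1) with h | h | h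
  · refine Or.inr ⟨by omega, fun j => ?_⟩
    have := S.simpleCoord_le_marks hγ j
    rw [hc, h, Int.cast_neg, Int.cast_one] at this
    exact_mod_cast (by linarith : (d j.succ : ℝ) ≤ 0)
  · rcases S.simpleCoord_nonneg_or_nonpos hγ with hs | hs
    · exact Or.inl ⟨h.ge, fun j => by simpa [hc, h] using hs j⟩
    · exact Or.inr ⟨h.le, fun j => by simpa [hc, h] using hs j⟩
  · refine Or.inl ⟨by omega, fun j => ?_⟩
    have := S.neg_marks_le_simpleCoord hγ j
    rw [hc, h, Int.cast_one] at this
    exact_mod_cast (by linarith : (0 : ℝ) ≤ d j.succ)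

theorem mem_posRootsI {I : Finset (Fin (S.l + 1))} {β : Module.Dual ℝ 𝔱} :
    β ∈ S.posRootsI I ↔ β ∈ S.R ∧
      ∃ c : Fin (S.l + 1) → ℕ, (∀ i ∈ I, c i = 0) ∧ β = ∑ i, (c i : ℝ) • S.α i := by
  simp [posRootsI]

theorem alpha_mem_posRootsI {I : Finset (Fin (S.l + 1))} {i : Fin (S.l + 1)} (hi : i ∉ I) :
    S.α i ∈ S.posRootsI I := by
  refine S.mem_posRootsI.mpr ⟨S.α_mem i, Pi.single i 1, fun k hk => ?_, ?_⟩
  · exact Pi.single_eq_of_ne (ne_of_mem_of_not_mem hk hi) 1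
  · simp [Pi.single_apply]

theorem neg_alpha_notMem_posRootsI {I : Finset (Fin (S.l + 1))} (hI : I.Nonempty)
    {i : Fin (S.l + 1)} (hi : i ∉ I) : -S.α i ∉ S.posRootsI I := by
  rintro hmem
  obtain ⟨-, c, hcI, hc⟩ := S.mem_posRootsI.mp hmem
  obtain ⟨j₀, hj₀⟩ := hI
  have hdep : ∑ k, ((c k : ℝ) + Pi.single (M := fun _ => ℝ) i 1 k) • S.α k = 0 := by
    simp [add_smul, Finset.sum_add_distrib, ← hc, Pi.single_apply]
  have hzero := congrFun (S.coeffs_eq_zero_of_sum_eq_zero hdep (j₀ := j₀)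
    (by simp [hcI j₀ hj₀, Pi.single_eq_of_ne (ne_of_mem_of_not_mem hj₀ hi)])) i
  simp only [Pi.single_eq_same, Pi.zero_apply] at hzero
  linarith [(c i).cast_nonneg (α := ℝ)]

theorem exists_coeff_pos_of_ne_alpha {β : Module.Dual ℝ 𝔱} (hβ : β ∈ S.R)
    {c : Fin (S.l + 1) → ℕ} (hc : β = ∑ k, (c k : ℝ) • S.α k) {i : Fin (S.l + 1)}
    (hne : β ≠ S.α i) : ∃ k ≠ i, 0 < c k := by
  by_contra! hzero
  have hβi : β = (c i : ℝ) • S.α i := by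
    rw [hc, Finset.sum_eq_single i (fun k _ hk => by simp [Nat.le_zero.mp (hzero k hk)]) (by simp)]
  rcases S.reduced _ (S.α_mem i) _ (hβi ▸ hβ) with h | h
  · exact hne (by rw [hβi, h, one_smul])
  · linarith [(c i).cast_nonneg (α := ℝ)]

theorem sub_smul_alpha_mem_posRootsI {I : Finset (Fin (S.l + 1))} (hI : I.Nonempty)
    {i : Fin (S.l + 1)} (hi : i ∉ I) {β : Module.Dual ℝ 𝔱} (hβ : β ∈ S.posRootsI I)
    (hne : β ≠ S.α i) : β - β (S.coroot (S.α i)) • S.α i ∈ S.posRootsI I := by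
  obtain ⟨hβR, c, hcI, hc⟩ := S.mem_posRootsI.mp hβ
  obtain ⟨n, hn⟩ := S.cryst _ (S.α_mem i) β hβR
  let d : Fin (S.l + 1) → ℤ := fun k => c k - if k = i then n else 0
  have hdk : ∀ k, k ≠ i → d k = c k := fun k hk => by simp [d, hk]
  have hγ : β - β (S.coroot (S.α i)) • S.α i = ∑ k, (d k : ℝ) • S.α k := by
    simp only [d, Int.cast_sub, Int.cast_natCast, sub_smul (M := Module.Dual ℝ 𝔱),
      Finset.sum_sub_distrib, ← hc, hn]
    simp [apply_ite]
  obtain ⟨j₀, hj₀⟩ := hI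
  have hj₀i : j₀ ≠ i := ne_of_mem_of_not_mem hj₀ hi
  rcases S.coeffs_nonneg_or_nonpos (hγ ▸ S.reflect_mem _ (S.α_mem i) β hβR) hγ
      (j₀ := j₀) (by simp [hdk j₀ hj₀i, hcI j₀ hj₀]) with hpos | hneg
  · refine S.mem_posRootsI.mpr ⟨S.reflect_mem _ (S.α_mem i) β hβR,
      fun k => (d k).toNat, fun k hk => ?_, ?_⟩
    · simp [hdk k (ne_of_mem_of_not_mem hk hi), hcI k hk]
    · rw [hγ]
      refine Finset.sum_congr rfl fun k _ => ?_
      rw [← Int.cast_natCast, Int.toNat_of_nonneg (hpos k)]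
  · obtain ⟨k, hki, hk⟩ := S.exists_coeff_pos_of_ne_alpha hβR hc hne
    have := hneg k
    rw [hdk k hki] at this
    omega

theorem rhoI_apply_coroot_of_notMem {I : Finset (Fin (S.l + 1))} (hI : I.Nonempty)
    {i : Fin (S.l + 1)} (hi : i ∉ I) : S.rhoI I (S.coroot (S.α i)) = 1 := by
  have hsum := sum_apply_eq_two_of_reflection_mem (S.pairB i) (S.alpha_mem_posRootsI hi)
    (S.neg_alpha_notMem_posRootsI hI hi) fun β hβ hne =>
      S.sub_smul_alpha_mem_posRootsI hI hi hβ hne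
  rw [rhoI, LinearMap.smul_apply, LinearMap.sum_apply, hsum, smul_eq_mul,
    inv_mul_cancel₀ two_ne_zero]

theorem posRoots_eq_posRootsI_zero : S.posRoots = S.posRootsI {0} := by
  ext β
  rw [mem_posRootsI, posRoots, Finset.mem_filter, Set.Finite.mem_toFinset]
  refine and_congr_right fun _ => ⟨fun ⟨c, hc⟩ => ⟨Fin.cons 0 c, by simp, ?_⟩,
    fun ⟨c, hc0, hc⟩ => ⟨fun i => c i.succ, ?_⟩⟩
  · simp [hc, Fin.sum_univ_succ]
  · simp [hc, Fin.sum_univ_succ, hc0 0 (Finset.mem_singleton_self 0)]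

theorem rho_eq_rhoI_zero : S.rho = S.rhoI {0} := by
  rw [rho, rhoI, posRoots_eq_posRootsI_zero]

theorem rho_apply_coroot_alpha_succ (i : Fin S.l) : S.rho (S.coroot (S.α i.succ)) = 1 := by
  rw [rho_eq_rhoI_zero]
  exact S.rhoI_apply_coroot_of_notMem (Finset.singleton_nonempty 0)
    (Finset.notMem_singleton.mpr (Fin.succ_ne_zero i))

theorem theta_apply_coroot_alpha_succ_nonneg (i : Fin S.l) :
    0 ≤ S.theta (S.coroot (S.α i.succ)) := by
  have hle := S.simpleCoord_le_marks (S.reflect_mem _ (S.α_mem i.succ) _ S.theta_mem) i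
  rw [map_sub, map_smul, S.simpleCoord_alpha_succ] at hle
  simpa [marks] using hle

theorem coroot_ne_zero {β : Module.Dual ℝ 𝔱} (hβ : β ∈ S.R) : S.coroot β ≠ 0 := fun h => by
  simpa [h] using S.pair_self β hβ

end Combinatorics

section InnerProduct

variable {𝔱 : Type*} [NormedAddCommGroup 𝔱] [InnerProductSpace ℝ 𝔱] (S : RSD 𝔱)

def InnerReflectionInvariant : Prop :=
  ∀ β ∈ S.R, ∀ x y : 𝔱, ⟪x - β x • S.coroot β, y - β y • S.coroot β⟫_ℝ = ⟪x, y⟫_ℝ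

theorem inner_coroot_self_pos {β : Module.Dual ℝ 𝔱} (hβ : β ∈ S.R) :
    0 < ⟪S.coroot β, S.coroot β⟫_ℝ :=
  real_inner_self_pos.mpr (S.coroot_ne_zero hβ)

variable {S}

theorem two_mul_inner_coroot (hB : S.InnerReflectionInvariant) {β : Module.Dual ℝ 𝔱}
    (hβ : β ∈ S.R) (x : 𝔱) :
    2 * ⟪x, S.coroot β⟫_ℝ = β x * ⟪S.coroot β, S.coroot β⟫_ℝ := by
  have h := hB β hβ x (S.coroot β)
  rw [S.pair_self β hβ, show S.coroot β - (2 : ℝ) • S.coroot β = -S.coroot β by module,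
    inner_neg_right, inner_sub_left, real_inner_smul_left] at h
  linarith

theorem coroot_neg (hB : S.InnerReflectionInvariant) {β : Module.Dual ℝ 𝔱} (hβ : β ∈ S.R) :
    S.coroot (-β) = -S.coroot β := by
  have hu := two_mul_inner_coroot hB hβ (S.coroot (-β))
  have hw := two_mul_inner_coroot hB (S.neg_mem hβ) (S.coroot β)
  have hβw : β (S.coroot (-β)) = -2 := by
    linarith [LinearMap.neg_apply β (S.coroot (-β)), S.pair_self _ (S.neg_mem hβ)]
  rw [hβw] at hu
  rw [LinearMap.neg_apply, S.pair_self β hβ] at hw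
  rw [← sub_eq_zero, sub_neg_eq_add, ← inner_self_eq_zero (𝕜 := ℝ), inner_add_left,
    inner_add_right, inner_add_right]
  linarith [real_inner_comm (S.coroot β) (S.coroot (-β))]

theorem apply_coroot_nonneg_of_apply_coroot_nonneg (hB : S.InnerReflectionInvariant)
    {β γ : Module.Dual ℝ 𝔱} (hβ : β ∈ S.R) (hγ : γ ∈ S.R) (h : 0 ≤ β (S.coroot γ)) :
    0 ≤ γ (S.coroot β) := by
  have hγβ := two_mul_inner_coroot hB hγ (S.coroot β)
  have hβγ := two_mul_inner_coroot hB hβ (S.coroot γ)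
  rw [real_inner_comm] at hγβ
  have : 0 ≤ γ (S.coroot β) * ⟪S.coroot γ, S.coroot γ⟫_ℝ := by
    rw [← hγβ, hβγ]
    exact mul_nonneg h real_inner_self_nonneg
  exact (mul_nonneg_iff_of_pos_right (S.inner_coroot_self_pos hγ)).mp this

theorem coroot_alpha_zero (hB : S.InnerReflectionInvariant) :
    S.coroot (S.α 0) = -S.coroot S.theta := by
  rw [← coroot_neg hB S.theta_mem, theta, neg_neg]

theorem alpha_apply_coroot_nonpos (hB : S.InnerReflectionInvariant) {i j : Fin (S.l + 1)}
    (hij : j ≠ i) : S.α j (S.coroot (S.α i)) ≤ 0 := by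
  cases i using Fin.cases with
  | zero =>
    obtain ⟨j, rfl⟩ := Fin.exists_succ_eq.mpr hij
    rw [coroot_alpha_zero hB, map_neg, neg_nonpos]
    exact apply_coroot_nonneg_of_apply_coroot_nonneg hB S.theta_mem (S.α_mem _)
      (S.theta_apply_coroot_alpha_succ_nonneg j)
  | succ i =>
    cases j using Fin.cases with
    | zero =>
      have := S.theta_apply_coroot_alpha_succ_nonneg i
      rw [theta, LinearMap.neg_apply] at this
      linarith
    | succ j =>
      -- the simple coordinates `Pi.single j 1 - n • Pi.single i 1` of the root `s_i α_j`
      -- have a common sign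
      have hji : j ≠ i := fun h => hij (h ▸ rfl)
      have hc :=
        S.simpleCoord_nonneg_or_nonpos (S.reflect_mem _ (S.α_mem i.succ) _ (S.α_mem j.succ))
      simp only [map_sub, map_smul, S.simpleCoord_alpha_succ] at hc
      rcases hc with h | h
      · simpa [hji] using h i
      · exact absurd (h j) (by simp [hji.symm])

theorem rhoI_apply_coroot_nonpos (hB : S.InnerReflectionInvariant) {I : Finset (Fin (S.l + 1))}
    {i : Fin (S.l + 1)} (hi : i ∈ I) : S.rhoI I (S.coroot (S.α i)) ≤ 0 := by
  rw [rhoI, LinearMap.smul_apply, LinearMap.sum_apply, smul_eq_mul]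
  refine mul_nonpos_of_nonneg_of_nonpos (by norm_num) (Finset.sum_nonpos fun β hβ => ?_)
  obtain ⟨-, c, hcI, rfl⟩ := S.mem_posRootsI.mp hβ
  rw [LinearMap.sum_apply]
  refine Finset.sum_nonpos fun k _ => ?_
  rw [LinearMap.smul_apply, smul_eq_mul]
  rcases eq_or_ne k i with rfl | hki
  · simp [hcI k hi]
  · exact mul_nonpos_of_nonneg_of_nonpos (Nat.cast_nonneg _) (alpha_apply_coroot_nonpos hB hki)

theorem rho_apply_coroot_alpha_zero (hB : S.InnerReflectionInvariant) :
    S.rho (S.coroot (S.α 0)) = 1 - S.hv := by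
  rw [coroot_alpha_zero hB, map_neg, hv]
  ring

theorem hv_pos (hB : S.InnerReflectionInvariant) : 0 < S.hv := by
  have h := rhoI_apply_coroot_nonpos hB (Finset.mem_singleton_self (0 : Fin (S.l + 1)))
  rw [← rho_eq_rhoI_zero, rho_apply_coroot_alpha_zero hB] at h
  linarith

theorem nuI_apply_coroot_add_kd (hB : S.InnerReflectionInvariant) (I : Finset (Fin (S.l + 1)))
    (i : Fin (S.l + 1)) :
    S.nuI I (S.coroot (S.α i)) + S.kd i = (1 - S.rhoI I (S.coroot (S.α i))) / S.hv := by
  have hv := (hv_pos hB).ne'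
  rw [nuI, LinearMap.smul_apply, LinearMap.sub_apply, smul_eq_mul]
  cases i using Fin.cases with
  | zero =>
    rw [rho_apply_coroot_alpha_zero hB, kd, if_pos rfl]
    field_simp
    ring
  | succ i =>
    rw [S.rho_apply_coroot_alpha_succ, kd, if_neg (Fin.succ_ne_zero i), add_zero]
    field_simp

theorem alpha_apply_add_kd (hB : S.InnerReflectionInvariant)
    (hnorm : ⟪S.coroot S.theta, S.coroot S.theta⟫_ℝ = 2) {ν : Module.Dual ℝ 𝔱} {ξ : 𝔱}
    (hξ : ∀ η, ⟪ξ, η⟫_ℝ = ν η) (i : Fin (S.l + 1)) :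
    S.α i ξ + S.kd i =
      2 / ⟪S.coroot (S.α i), S.coroot (S.α i)⟫_ℝ * (ν (S.coroot (S.α i)) + S.kd i) := by
  have hpos := S.inner_coroot_self_pos (S.α_mem i)
  have h := two_mul_inner_coroot hB (S.α_mem i) ξ
  rw [hξ] at h
  have hkd : S.kd i * ⟪S.coroot (S.α i), S.coroot (S.α i)⟫_ℝ = 2 * S.kd i := by
    cases i using Fin.cases with
    | zero => rw [coroot_alpha_zero hB, inner_neg_neg, hnorm, mul_comm]
    | succ i => simp [kd, Fin.succ_ne_zero]
  field_simp
  linarith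

end InnerProduct

end RSD

end CCQ

open CCQ Function

theorem statement6_general {𝔱 : Type} [NormedAddCommGroup 𝔱] [InnerProductSpace ℝ 𝔱]
    (S : RSD 𝔱)
    (hBinv : ∀ β ∈ S.R, ∀ x y : 𝔱,
      ⟪x - β x • S.coroot β, y - β y • S.coroot β⟫_ℝ = ⟪x, y⟫_ℝ)
    (hBnorm : ⟪S.coroot S.theta, S.coroot S.theta⟫_ℝ = 2)
    (I : Finset (Fin (S.l + 1))) (hI : I.Nonempty) :
    (∀ i ∉ I, S.nuI I (S.coroot (S.α i)) + S.kd i = 0) ∧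
    (∀ i ∈ I, 0 < S.nuI I (S.coroot (S.α i)) + S.kd i) ∧
    (∀ ξ : 𝔱, (∀ η : 𝔱, ⟪ξ, η⟫_ℝ = S.nuI I η) →
      (∀ i, 0 ≤ S.α i ξ + S.kd i) ∧ (∀ i ∉ I, S.α i ξ + S.kd i = 0) ∧
        (∀ i ∈ I, 0 < S.α i ξ + S.kd i)) := by
  have hface : ∀ i ∉ I, S.nuI I (S.coroot (S.α i)) + S.kd i = 0 := fun i hi => by
    rw [RSD.nuI_apply_coroot_add_kd hBinv, S.rhoI_apply_coroot_of_notMem hI hi, sub_self,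
      zero_div]
  have hinterior : ∀ i ∈ I, 0 < S.nuI I (S.coroot (S.α i)) + S.kd i := fun i hi => by
    rw [RSD.nuI_apply_coroot_add_kd hBinv]
    exact div_pos (by linarith [RSD.rhoI_apply_coroot_nonpos hBinv hi]) (RSD.hv_pos hBinv)
  refine ⟨hface, hinterior, fun ξ hξ => ?_⟩
  have hξ_face : ∀ i ∉ I, S.α i ξ + S.kd i = 0 := fun i hi => by
    rw [RSD.alpha_apply_add_kd hBinv hBnorm hξ, hface i hi, mul_zero]
  have hξ_interior : ∀ i ∈ I, 0 < S.α i ξ + S.kd i := fun i hi => by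
    rw [RSD.alpha_apply_add_kd hBinv hBnorm hξ]
    exact mul_pos (div_pos two_pos (S.inner_coroot_self_pos (S.α_mem i))) (hinterior i hi)
  exact ⟨fun i => if hi : i ∈ I then (hξ_interior i hi).le else (hξ_face i hi).ge,
    hξ_face, hξ_interior⟩

/-- for every nonempty `I ⊆ {0,…,l}`: `⟨ν_I,α_i^∨⟩ + δ_{i,0} = 0` for all
`i ∉ I` and `⟨ν_I,α_i^∨⟩ + δ_{i,0} > 0` for all `i ∈ I`; equivalently, the point
`ν_I^♯ = B^♯(ν_I)` (the vector `ξ` with `⟪ξ,η⟫ = ν_I(η)` for all `η`) lies in the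
relative interior of the face `{ξ ∈ Δ : ⟨α_i,ξ⟩ + δ_{i,0} = 0 for i ∉ I}` of the
fundamental alcove `Δ`.  Here the inner product is the basic inner product: it is
`W`-invariant (`hBinv`) and normalized by `B(θ^∨,θ^∨) = 2` (`hBnorm`). -/
theorem statement6 {𝔱 : Type} [NormedAddCommGroup 𝔱] [InnerProductSpace ℝ 𝔱]
    [FiniteDimensional ℝ 𝔱] (S : RSD 𝔱)
    (hBinv : ∀ β ∈ S.R, ∀ x y : 𝔱,
      ⟪x - β x • S.coroot β, y - β y • S.coroot β⟫_ℝ = ⟪x, y⟫_ℝ)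
    (hBnorm : ⟪S.coroot S.theta, S.coroot S.theta⟫_ℝ = 2)
    (I : Finset (Fin (S.l + 1))) (hI : I.Nonempty) :
    (∀ i ∉ I, S.nuI I (S.coroot (S.α i)) + S.kd i = 0) ∧
    (∀ i ∈ I, 0 < S.nuI I (S.coroot (S.α i)) + S.kd i) ∧
    (∀ ξ : 𝔱, (∀ η : 𝔱, ⟪ξ, η⟫_ℝ = S.nuI I η) →
      (∀ i, 0 ≤ S.α i ξ + S.kd i) ∧ (∀ i ∉ I, S.α i ξ + S.kd i = 0) ∧
        (∀ i ∈ I, 0 < S.α i ξ + S.kd i)) :=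
  statement6_general S hBinv hBnorm I hI
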